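/- Let α₁,…,α₆,ε ∈ ℝ satisfy α₁α₂ = α₅α₆, and let (x₁,…,x₅,x̃₁,…,x̃₅) ∈ ℝ¹⁰ satisfy the dCET₂ equations x̃₁ − x₁ = εα₁(x̃₂x₃ + x₂x̃₃), x̃₂ − x₂ = εα₂(x̃₃x₁ + x₃x̃₁), x̃₃ − x₃ = εα₃(x̃₁x₂ + x₁x̃₂) + εα₄(x̃₄x₅ + x₄x̃₅), x̃₄ − x₄ = εα₅(x̃₅x₃ + x₅x̃₃), x̃₅ − x₅ = εα₆(x̃₃x₄ + x₃x̃₄). Assume 1 − ε²α₁α₂x₃² ≠ 0 and 1 − ε²α₁α₂x̃₃² ≠ 0. Then the functions H₂(ε) = (α₃α₅x₂² − α₂α₅x₃² + α₂α₄x₄²)/(1 − ε²α₁α₂x₃²), H₄(ε) = (α₅x₂x₅ − α₂x₁x₄)/(1 − ε²α₁α₂x₃²) and H₅(ε) = (α₅x₁x₅ − α₁x₂x₄)/(1 − ε²α₁α₂x₃²) are conserved quantities: each takes the same value at (x̃₁,…,x̃₅) as at (x₁,…,x₅). -/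
import Mathlib


/-- Under the superintegrability condition `α₁α₂ = α₅α₆`, the functions
`H₂(ε)`, `H₄(ε)`, `H₅(ε)` are conserved quantities of the Hirota–Kimura
discretization dCET₂ of two coupled Euler tops. -/
theorem dCET2_superintegrable_integrals
    (a1 a2 a3 a4 a5 a6 ε x1 x2 x3 x4 x5 xt1 xt2 xt3 xt4 xt5 : ℝ)
    (hcond : a1 * a2 = a5 * a6)
    (h1 : xt1 - x1 = ε * a1 * (xt2 * x3 + x2 * xt3))
    (h2 : xt2 - x2 = ε * a2 * (xt3 * x1 + x3 * xt1))
    (h3 : xt3 - x3 = ε * a3 * (xt1 * x2 + x1 * xt2) + ε * a4 * (xt4 * x5 + x4 * xt5))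
    (h4 : xt4 - x4 = ε * a5 * (xt5 * x3 + x5 * xt3))
    (h5 : xt5 - x5 = ε * a6 * (xt3 * x4 + x3 * xt4))
    (hd : 1 - ε ^ 2 * a1 * a2 * x3 ^ 2 ≠ 0)
    (hdt : 1 - ε ^ 2 * a1 * a2 * xt3 ^ 2 ≠ 0) :
    (a3 * a5 * xt2 ^ 2 - a2 * a5 * xt3 ^ 2 + a2 * a4 * xt4 ^ 2)
        / (1 - ε ^ 2 * a1 * a2 * xt3 ^ 2)
      = (a3 * a5 * x2 ^ 2 - a2 * a5 * x3 ^ 2 + a2 * a4 * x4 ^ 2)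
        / (1 - ε ^ 2 * a1 * a2 * x3 ^ 2) ∧
    (a5 * xt2 * xt5 - a2 * xt1 * xt4) / (1 - ε ^ 2 * a1 * a2 * xt3 ^ 2)
      = (a5 * x2 * x5 - a2 * x1 * x4) / (1 - ε ^ 2 * a1 * a2 * x3 ^ 2) ∧
    (a5 * xt1 * xt5 - a1 * xt2 * xt4) / (1 - ε ^ 2 * a1 * a2 * xt3 ^ 2)
      = (a5 * x1 * x5 - a1 * x2 * x4) / (1 - ε ^ 2 * a1 * a2 * x3 ^ 2) := by
  refine ⟨?_, ?_, ?_⟩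
  · rw [div_eq_div_iff hdt hd]
    linear_combination (a3 * a5 * (xt2 + x2)) * h2 - (a2 * a5 * (xt3 + x3)) * h3
      + (a2 * a4 * (xt4 + x4)) * h4
      + (ε * a2 * a3 * a5 * (x3 * xt2 - x2 * xt3)) * h1
      + (ε * a2 * a4 * a5 * (x3 * xt4 - x4 * xt3)) * h5
      + (-(a2 * a4 * ε ^ 2 * x3 ^ 2 * xt4 ^ 2) + a2 * a4 * ε ^ 2 * x4 ^ 2 * xt3 ^ 2) * hcond
  · rw [div_eq_div_iff hdt hd]
    linear_combination (a5 * xt2) * h5 + (a5 * x5) * h2 - (a2 * xt1) * h4 - (a2 * x4) * h1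
      + (ε * a1 * a2 * xt3 * x4) * h2 + (ε * a1 * a2 * x3 * xt2) * h4
      - (ε * a2 * a5 * x5 * xt3) * h1 - (ε * a2 * a5 * x3 * xt1) * h5
      + (a2 * ε ^ 2 * x3 ^ 2 * xt1 * xt4 - ε * x4 * xt2 * xt3
          + a2 * ε ^ 2 * x3 * x4 * xt1 * xt3 - ε * x3 * xt2 * xt4) * hcond
  · rw [div_eq_div_iff hdt hd]
    linear_combination (a5 * xt1) * h5 + (a5 * x5) * h1 - (a1 * xt2) * h4 - (a1 * x4) * h2
      + (ε * a1 * a2 * xt3 * x4) * h1 + (ε * a1 * a2 * x3 * xt1) * h4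
      - (ε * a1 * a5 * x3 * xt2) * h5 - (ε * a1 * a5 * xt3 * x5) * h2
      + (a1 * ε ^ 2 * x3 ^ 2 * xt2 * xt4 - ε * x4 * xt1 * xt3
          + a1 * ε ^ 2 * x3 * x4 * xt2 * xt3 - ε * x3 * xt1 * xt4) * hcond
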